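/- Let α : ℝ → (−d_N/2, d_N/2) be smooth, odd, strictly increasing with α(±∞) = ±d_N/2, satisfying α′(t) = √(F̄(α(t))) for all t, ∫_ℝ(|α′|² + F̄(α)) dt = c₀^{F̄}, and exponential decay bounds |α′(t)| + |α(t) + d_N/2| ≤ C₁e^{C₂t} for t ≤ 0 and |α′(t)| + |α(t) − d_N/2| ≤ C₃e^{−C₄t} for t ≥ 0 (for some C₁,C₂,C₃,C₄ > 0). For L > 0 let α_{2L} be the truncation: α_{2L}(t) = ((t+2L)/L)·α(−L) + ((t+L)/L)·(d_N/2) for −2L ≤ t ≤ −L [interpreted so that α_{2L}(−2L) = −d_N/2 and α_{2L}(−L) = α(−L)], α_{2L}(t) = α(t) for −L ≤ t ≤ L, and α_{2L}(t) = ((2L−t)/L)·α(L) + ((t−L)/L)·(d_N/2) for L ≤ t ≤ 2L. Then: (i) α_{2L} is monotone increasing, −d_N/2 ≤ α_{2L}(t) ≤ d_N/2 with α_{2L}(±2L) = ±d_N/2, and there is C > 0 with max_{|t|≤2L}(|α′_{2L}(t)|² + F̄(α_{2L}(t))) ≤ C; (ii) there exist L₀ > 0 and c₁, c₂ > 0 such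 that for every L ≥ L₀, ∫_{−2L}^{2L}(|α′_{2L}(t)|² + F̄(α_{2L}(t))) dt ≤ c₀^{F̄} + c₂e^{−c₁L}. -/

import Mathlib

noncomputable section
open MeasureTheory Metric Set Filter

abbrev Euc (n : ℕ) := EuclideanSpace ℝ (Fin n)

/-- The truncation `α_{2L}` of the optimal profile `α`. -/
def trunc (α : ℝ → ℝ) (dN L t : ℝ) : ℝ :=
  if t ≤ -L then ((t + 2 * L) / L) * α (-L) + ((t + L) / L) * (dN / 2)
  else if t ≤ L then α t
  else ((2 * L - t) / L) * α L + ((t - L) / L) * (dN / 2)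

namespace TruncAux

variable {α : ℝ → ℝ} {dN L : ℝ}

lemma trunc_eq1 {t : ℝ} (ht : t ≤ -L) :
    trunc α dN L t = ((t + 2 * L) / L) * α (-L) + ((t + L) / L) * (dN / 2) := if_pos ht

lemma trunc_eq2 (hL : 0 < L) {t : ℝ} (h1 : -L ≤ t) (h2 : t ≤ L) : trunc α dN L t = α t := by
  unfold trunc
  rcases eq_or_lt_of_le h1 with h | h
  · rw [if_pos h.symm.le, ← h]
    field_simp
    ring
  · rw [if_neg (not_le.mpr h), if_pos h2]

lemma trunc_eq3 (hL : 0 < L) {t : ℝ} (ht : L ≤ t) :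
    trunc α dN L t = ((2 * L - t) / L) * α L + ((t - L) / L) * (dN / 2) := by
  unfold trunc
  rcases eq_or_lt_of_le ht with h | h
  · rw [if_neg (by push_neg; nlinarith), if_pos h.symm.le, ← h]
    field_simp
    ring
  · rw [if_neg (by push_neg; nlinarith), if_neg (not_le.mpr h)]

lemma hasDerivAt_lin1 (hL : L ≠ 0) (a d : ℝ) (t : ℝ) :
    HasDerivAt (fun x => ((x + 2 * L) / L) * a + ((x + L) / L) * d) ((a + d) / L) t := by
  have h1 : HasDerivAt (fun x : ℝ => ((x + 2 * L) / L) * a) ((1 : ℝ) / L * a) t :=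
    (((hasDerivAt_id t).add_const (2 * L)).div_const L).mul_const a
  have h2 : HasDerivAt (fun x : ℝ => ((x + L) / L) * d) ((1 : ℝ) / L * d) t :=
    (((hasDerivAt_id t).add_const L).div_const L).mul_const d
  refine (h1.add h2).congr_deriv ?_
  ring

lemma hasDerivAt_lin3 (hL : L ≠ 0) (b d : ℝ) (t : ℝ) :
    HasDerivAt (fun x => ((2 * L - x) / L) * b + ((x - L) / L) * d) ((d - b) / L) t := by
  have h1 : HasDerivAt (fun x : ℝ => ((2 * L - x) / L) * b) ((-1 : ℝ) / L * b) t := by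
    have : HasDerivAt (fun x : ℝ => 2 * L - x) (-1 : ℝ) t := by
      simpa using (hasDerivAt_id t).const_sub (2 * L)
    exact (this.div_const L).mul_const b
  have h2 : HasDerivAt (fun x : ℝ => ((x - L) / L) * d) ((1 : ℝ) / L * d) t :=
    (((hasDerivAt_id t).sub_const L).div_const L).mul_const d
  refine (h1.add h2).congr_deriv ?_
  ring

lemma deriv_trunc1 (hL : 0 < L) {t : ℝ} (ht : t < -L) :
    deriv (trunc α dN L) t = (α (-L) + dN / 2) / L := by
  have he : trunc α dN L =ᶠ[nhds t]
      fun x => ((x + 2 * L) / L) * α (-L) + ((x + L) / L) * (dN / 2) := by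
    filter_upwards [Iio_mem_nhds ht] with x hx
    exact trunc_eq1 hx.le
  rw [he.deriv_eq]
  exact (hasDerivAt_lin1 hL.ne' (α (-L)) (dN / 2) t).deriv

lemma deriv_trunc2 (hL : 0 < L) {t : ℝ} (h1 : -L < t) (h2 : t < L) :
    deriv (trunc α dN L) t = deriv α t := by
  have he : trunc α dN L =ᶠ[nhds t] α := by
    filter_upwards [Ioo_mem_nhds h1 h2] with x hx
    exact trunc_eq2 hL hx.1.le hx.2.le
  exact he.deriv_eq

lemma deriv_trunc3 (hL : 0 < L) {t : ℝ} (ht : L < t) :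
    deriv (trunc α dN L) t = (dN / 2 - α L) / L := by
  have he : trunc α dN L =ᶠ[nhds t]
      fun x => ((2 * L - x) / L) * α L + ((x - L) / L) * (dN / 2) := by
    filter_upwards [Ioi_mem_nhds ht] with x hx
    exact trunc_eq3 hL hx.le
  rw [he.deriv_eq]
  exact (hasDerivAt_lin3 hL.ne' (α L) (dN / 2) t).deriv

lemma deriv_trunc_junc_neg (hL : 0 < L) (hα : DifferentiableAt ℝ α (-L)) :
    deriv (trunc α dN L) (-L) = deriv α (-L) ∨ deriv (trunc α dN L) (-L) = 0 := by
  by_cases hd : DifferentiableAt ℝ (trunc α dN L) (-L)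
  · left
    have hmem : (-L) ∈ Icc (-L) L := ⟨le_rfl, by linarith⟩
    have hu : UniqueDiffWithinAt ℝ (Icc (-L) L) (-L) :=
      uniqueDiffOn_Icc (by linarith : (-L) < L) _ hmem
    have e1 : derivWithin (trunc α dN L) (Icc (-L) L) (-L) = deriv (trunc α dN L) (-L) :=
      hd.derivWithin hu
    have e2 : derivWithin (trunc α dN L) (Icc (-L) L) (-L) = derivWithin α (Icc (-L) L) (-L) :=
      derivWithin_congr (fun x hx => trunc_eq2 hL hx.1 hx.2) (trunc_eq2 hL hmem.1 hmem.2)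
    have e3 : derivWithin α (Icc (-L) L) (-L) = deriv α (-L) := hα.derivWithin hu
    rw [← e1, e2, e3]
  · right
    exact deriv_zero_of_not_differentiableAt hd

lemma deriv_trunc_junc_pos (hL : 0 < L) (hα : DifferentiableAt ℝ α L) :
    deriv (trunc α dN L) L = deriv α L ∨ deriv (trunc α dN L) L = 0 := by
  by_cases hd : DifferentiableAt ℝ (trunc α dN L) L
  · left
    have hmem : L ∈ Icc (-L) L := ⟨by linarith, le_rfl⟩
    have hu : UniqueDiffWithinAt ℝ (Icc (-L) L) L :=
      uniqueDiffOn_Icc (by linarith : (-L) < L) _ hmem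
    have e1 : derivWithin (trunc α dN L) (Icc (-L) L) L = deriv (trunc α dN L) L :=
      hd.derivWithin hu
    have e2 : derivWithin (trunc α dN L) (Icc (-L) L) L = derivWithin α (Icc (-L) L) L :=
      derivWithin_congr (fun x hx => trunc_eq2 hL hx.1 hx.2) (trunc_eq2 hL hmem.1 hmem.2)
    have e3 : derivWithin α (Icc (-L) L) L = deriv α L := hα.derivWithin hu
    rw [← e1, e2, e3]
  · right
    exact deriv_zero_of_not_differentiableAt hd

lemma lin1_val (hL : 0 < L) : ((-L + 2 * L) / L) * α (-L) + ((-L + L) / L) * (dN / 2) = α (-L) := by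
  field_simp
  ring

lemma lin3_val (hL : 0 < L) : ((2 * L - L) / L) * α L + ((L - L) / L) * (dN / 2) = α L := by
  field_simp
  ring

lemma lin1_mono (hL : 0 < L) (hA : -(dN / 2) ≤ α (-L)) {u v : ℝ} (huv : u ≤ v) :
    ((u + 2 * L) / L) * α (-L) + ((u + L) / L) * (dN / 2) ≤
      ((v + 2 * L) / L) * α (-L) + ((v + L) / L) * (dN / 2) := by
  have h : 0 ≤ (v - u) * ((α (-L) + dN / 2) / L) :=
    mul_nonneg (by linarith) (div_nonneg (by linarith) hL.le)
  have e : ((v + 2 * L) / L) * α (-L) + ((v + L) / L) * (dN / 2)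
      - (((u + 2 * L) / L) * α (-L) + ((u + L) / L) * (dN / 2))
      = (v - u) * ((α (-L) + dN / 2) / L) := by
    field_simp
    ring
  linarith

lemma lin3_mono (hL : 0 < L) (hB : α L ≤ dN / 2) {u v : ℝ} (huv : u ≤ v) :
    ((2 * L - u) / L) * α L + ((u - L) / L) * (dN / 2) ≤
      ((2 * L - v) / L) * α L + ((v - L) / L) * (dN / 2) := by
  have h : 0 ≤ (v - u) * ((dN / 2 - α L) / L) :=
    mul_nonneg (by linarith) (div_nonneg (by linarith) hL.le)
  have e : ((2 * L - v) / L) * α L + ((v - L) / L) * (dN / 2)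
      - (((2 * L - u) / L) * α L + ((u - L) / L) * (dN / 2))
      = (v - u) * ((dN / 2 - α L) / L) := by
    field_simp
    ring
  linarith

lemma trunc_mono (hL : 0 < L) (hα : Monotone α)
    (hA : -(dN / 2) ≤ α (-L)) (hB : α L ≤ dN / 2) :
    Monotone (trunc α dN L) := by
  intro s t hst
  rcases le_or_gt t (-L) with h1 | h1
  · rw [trunc_eq1 (hst.trans h1), trunc_eq1 h1]
    exact lin1_mono hL hA hst
  · rcases le_or_gt t L with h2 | h2
    · rcases le_or_gt s (-L) with h3 | h3
      · rw [trunc_eq1 h3, trunc_eq2 hL h1.le h2]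
        calc ((s + 2 * L) / L) * α (-L) + ((s + L) / L) * (dN / 2)
            ≤ ((-L + 2 * L) / L) * α (-L) + ((-L + L) / L) * (dN / 2) := lin1_mono hL hA h3
          _ = α (-L) := lin1_val hL
          _ ≤ α t := hα h1.le
      · rw [trunc_eq2 hL h3.le (hst.trans h2), trunc_eq2 hL h1.le h2]
        exact hα hst
    · rcases le_or_gt s (-L) with h3 | h3
      · rw [trunc_eq1 h3, trunc_eq3 hL h2.le]
        calc ((s + 2 * L) / L) * α (-L) + ((s + L) / L) * (dN / 2)
            ≤ ((-L + 2 * L) / L) * α (-L) + ((-L + L) / L) * (dN / 2) := lin1_mono hL hA h3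
          _ = α (-L) := lin1_val hL
          _ ≤ α L := hα (by linarith)
          _ = ((2 * L - L) / L) * α L + ((L - L) / L) * (dN / 2) := (lin3_val hL).symm
          _ ≤ _ := lin3_mono hL hB h2.le
      · rcases le_or_gt s L with h4 | h4
        · rw [trunc_eq2 hL h3.le h4, trunc_eq3 hL h2.le]
          calc α s ≤ α L := hα h4
            _ = ((2 * L - L) / L) * α L + ((L - L) / L) * (dN / 2) := (lin3_val hL).symm
            _ ≤ _ := lin3_mono hL hB h2.le
        · rw [trunc_eq3 hL h4.le, trunc_eq3 hL h2.le]
          exact lin3_mono hL hB hst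

lemma trunc_endpoint_neg (hL : 0 < L) : trunc α dN L (-(2 * L)) = -(dN / 2) := by
  rw [trunc_eq1 (by linarith)]
  field_simp
  ring

lemma trunc_endpoint_pos (hL : 0 < L) : trunc α dN L (2 * L) = dN / 2 := by
  rw [trunc_eq3 hL (by linarith)]
  field_simp
  ring

end TruncAux

open TruncAux in
set_option maxHeartbeats 1600000 in
theorem truncated_profile_properties
    (dN δN : ℝ) (hdN : 0 < dN) (hδN : 0 < δN) (hδNdN : 2 * δN < dN)
    (f : ℝ → ℝ) (hfsm : ContDiffOn ℝ (⊤ : ℕ∞) f (Ici 0)) (hfnn : ∀ t, 0 ≤ t → 0 ≤ f t)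
    (c₁' c₂' c₃' : ℝ) (hc₁' : 0 < c₁') (hc₂' : 0 < c₂') (hc₃' : 0 < c₃')
    (hH1 : ∀ t, 0 ≤ t → t ≤ δN ^ 2 → c₁' * t ≤ f t ∧ f t ≤ c₂' * t)
    (hH2 : ∀ t, δN ^ 2 ≤ t → c₃' ≤ f t)
    (Fb : ℝ → ℝ)
    (hFbm : ∀ s : ℝ, s ≤ 0 → Fb s = f ((dN / 2 + s) ^ 2))
    (hFbp : ∀ s : ℝ, 0 ≤ s → Fb s = f ((dN / 2 - s) ^ 2))
    (c0b : ℝ) (hc0b : c0b = 4 * ∫ l in (0:ℝ)..(dN / 2), Real.sqrt (Fb l))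
    (α : ℝ → ℝ) (hαsm : ContDiff ℝ (⊤ : ℕ∞) α) (hαodd : ∀ t, α (-t) = -α t)
    (hαmono : StrictMono α) (hαrange : ∀ t, α t ∈ Ioo (-(dN / 2)) (dN / 2))
    (hαtop : Tendsto α atTop (nhds (dN / 2)))
    (hαbot : Tendsto α atBot (nhds (-(dN / 2))))
    (hαode : ∀ t, deriv α t = Real.sqrt (Fb (α t)))
    (hαint : Integrable (fun t => deriv α t ^ 2 + Fb (α t)))
    (hαen : (∫ t : ℝ, (deriv α t ^ 2 + Fb (α t))) = c0b)
    (C₁ C₂ C₃ C₄ : ℝ) (hC₁ : 0 < C₁) (hC₂ : 0 < C₂) (hC₃ : 0 < C₃) (hC₄ : 0 < C₄)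
    (hdecm : ∀ t : ℝ, t ≤ 0 → |deriv α t| + |α t + dN / 2| ≤ C₁ * Real.exp (C₂ * t))
    (hdecp : ∀ t : ℝ, 0 ≤ t → |deriv α t| + |α t - dN / 2| ≤ C₃ * Real.exp (-(C₄ * t)))
    :
    (∀ L : ℝ, 0 < L →
      MonotoneOn (trunc α dN L) (Icc (-(2 * L)) (2 * L)) ∧
      (∀ t ∈ Icc (-(2 * L)) (2 * L), trunc α dN L t ∈ Icc (-(dN / 2)) (dN / 2)) ∧
      trunc α dN L (-(2 * L)) = -(dN / 2) ∧ trunc α dN L (2 * L) = dN / 2 ∧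
      ∃ C > (0:ℝ), ∀ t ∈ Icc (-(2 * L)) (2 * L),
        deriv (trunc α dN L) t ^ 2 + Fb (trunc α dN L t) ≤ C) ∧
    (∃ L₀ > (0:ℝ), ∃ c₁ > (0:ℝ), ∃ c₂ > (0:ℝ), ∀ L : ℝ, L₀ ≤ L →
      (∫ t in (-(2 * L))..(2 * L), (deriv (trunc α dN L) t ^ 2 + Fb (trunc α dN L t)))
        ≤ c0b + c₂ * Real.exp (-(c₁ * L))) := by
  have hFbeq : ∀ s : ℝ, Fb s = f ((dN / 2 - |s|) ^ 2) := by
    intro s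
    rcases le_total s 0 with h | h
    · rw [hFbm s h, abs_of_nonpos h]; ring_nf
    · rw [hFbp s h, abs_of_nonneg h]
  have hFbc : Continuous Fb := by
    have : Fb = fun s => f ((dN / 2 - |s|) ^ 2) := funext hFbeq
    rw [this]
    exact hfsm.continuousOn.comp_continuous
      (by continuity) (fun s => mem_Ici.mpr (sq_nonneg _))
  have hFb0 : ∀ s : ℝ, 0 ≤ Fb s := by
    intro s
    rw [hFbeq s]
    exact hfnn _ (sq_nonneg _)
  have hαdiff : Differentiable ℝ α := hαsm.differentiable (by simp)
  have hdc : Continuous (deriv α) := by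
    have : deriv α = fun t => Real.sqrt (Fb (α t)) := funext hαode
    rw [this]
    exact (hFbc.comp hαsm.continuous).sqrt
  have hα0 : α 0 = 0 := by have := hαodd 0; simp at this; linarith
  constructor
  · -- part (i)
    intro L hL
    have hA := hαrange (-L)
    have hB := hαrange L
    have hmono := trunc_mono (α := α) (dN := dN) hL hαmono.monotone hA.1.le hB.2.le
    have hrange : ∀ t ∈ Icc (-(2 * L)) (2 * L), trunc α dN L t ∈ Icc (-(dN / 2)) (dN / 2) := by
      intro t ht
      constructor
      · rw [← trunc_endpoint_neg (α := α) hL]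
        exact hmono ht.1
      · rw [← trunc_endpoint_pos (α := α) hL]
        exact hmono ht.2
    refine ⟨hmono.monotoneOn _, hrange, trunc_endpoint_neg hL, trunc_endpoint_pos hL, ?_⟩
    -- sup bound
    obtain ⟨z, hz, hzmax'⟩ := (isCompact_Icc (a := -L) (b := L)).exists_isMaxOn
      (nonempty_Icc.mpr (by linarith)) ((hdc.pow 2).continuousOn)
    have hzmax : ∀ y ∈ Icc (-L) L, deriv α y ^ 2 ≤ deriv α z ^ 2 := fun y hy => hzmax' hy
    obtain ⟨w, hw, hwmax'⟩ := (isCompact_Icc (a := -(dN / 2)) (b := dN / 2)).exists_isMaxOn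
      (nonempty_Icc.mpr (by linarith)) hFbc.continuousOn
    have hwmax : ∀ y ∈ Icc (-(dN / 2)) (dN / 2), Fb y ≤ Fb w := fun y hy => hwmax' hy
    set s1 := (α (-L) + dN / 2) / L with hs1
    set s3 := (dN / 2 - α L) / L with hs3
    set M1 := deriv α z ^ 2 with hM1
    set M2 := Fb w with hM2
    have hM1nn : 0 ≤ M1 := sq_nonneg _
    have hM2nn : 0 ≤ M2 := hFb0 w
    refine ⟨s1 ^ 2 + s3 ^ 2 + M1 + M2 + 1, by positivity, ?_⟩
    intro t ht
    have hFbb : Fb (trunc α dN L t) ≤ M2 := hwmax _ (hrange t ht)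
    have hdb : deriv (trunc α dN L) t ^ 2 ≤ s1 ^ 2 + s3 ^ 2 + M1 := by
      rcases lt_trichotomy t (-L) with h | h | h
      · rw [deriv_trunc1 hL h]
        nlinarith [sq_nonneg s3]
      · subst h
        rcases deriv_trunc_junc_neg (α := α) (dN := dN) hL (hαdiff _) with h | h <;> rw [h]
        · have := hzmax (-L) ⟨le_rfl, by linarith⟩
          nlinarith [sq_nonneg s1, sq_nonneg s3]
        · nlinarith [sq_nonneg s1, sq_nonneg s3]
      · rcases lt_trichotomy t L with h2 | h2 | h2
        · rw [deriv_trunc2 hL h h2]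
          have := hzmax t ⟨h.le, h2.le⟩
          nlinarith [sq_nonneg s1, sq_nonneg s3]
        · subst h2
          rcases deriv_trunc_junc_pos (α := α) (dN := dN) hL (hαdiff _) with h | h <;> rw [h]
          · have := hzmax t ⟨by linarith, le_rfl⟩
            nlinarith [sq_nonneg s1, sq_nonneg s3]
          · nlinarith [sq_nonneg s1, sq_nonneg s3]
        · rw [deriv_trunc3 hL h2]
          nlinarith [sq_nonneg s1]
    linarith
  · -- part (ii)
    set c : ℝ := min C₂ C₄ with hc
    have hcpos : 0 < c := lt_min hC₂ hC₄
    clear_value c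
    refine ⟨max 1 (max (Real.log (C₁ / δN) / C₂) (Real.log (C₃ / δN) / C₄)),
      lt_of_lt_of_le one_pos (le_max_left _ _), c, hcpos,
      (1 + c₂') * (C₁ ^ 2 + C₃ ^ 2) / c, by positivity, ?_⟩
    intro L hLL
    have hL1 : (1:ℝ) ≤ L := le_trans (le_max_left _ _) hLL
    have hL : 0 < L := lt_of_lt_of_le one_pos hL1
    -- decay at -L and L
    have hdm := hdecm (-L) (by linarith)
    have hdp := hdecp L hL.le
    have hA := hαrange (-L)
    have hB := hαrange L
    have hABn : α (-L) = -α L := hαodd L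
    have hBpos : 0 < α L := by
      have := hαmono (show (0:ℝ) < L from hL)
      rwa [hα0] at this
    have hεm : α (-L) + dN / 2 ≤ C₁ * Real.exp (-(C₂ * L)) := by
      have h1 : |α (-L) + dN / 2| = α (-L) + dN / 2 := abs_of_nonneg (by linarith [hA.1])
      have h2 : C₂ * (-L) = -(C₂ * L) := by ring
      rw [h2] at hdm
      have := abs_nonneg (deriv α (-L))
      linarith [hdm, h1.symm.le, abs_nonneg (α (-L) + dN / 2)]
    have hεp : dN / 2 - α L ≤ C₃ * Real.exp (-(C₄ * L)) := by
      have h1 : |α L - dN / 2| = dN / 2 - α L := by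
        rw [abs_of_nonpos (by linarith [hB.2])]; ring
      have := abs_nonneg (deriv α L)
      linarith
    -- smallness
    have hsm : C₁ * Real.exp (-(C₂ * L)) ≤ δN := by
      have h1 : Real.log (C₁ / δN) ≤ C₂ * L := by
        have : Real.log (C₁ / δN) / C₂ ≤ L :=
          le_trans (le_trans (le_max_left _ _) (le_max_right _ _)) hLL
        calc Real.log (C₁ / δN) = Real.log (C₁ / δN) / C₂ * C₂ := by field_simp
          _ ≤ L * C₂ := by nlinarith
          _ = C₂ * L := by ring
      have h2 : C₁ / δN ≤ Real.exp (C₂ * L) := (Real.log_le_iff_le_exp (by positivity)).mp h1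
      rw [Real.exp_neg]
      rw [← div_eq_mul_inv]
      rw [div_le_iff₀ (Real.exp_pos _)]
      calc C₁ = (C₁ / δN) * δN := by field_simp
        _ ≤ Real.exp (C₂ * L) * δN := by nlinarith [Real.exp_pos (C₂ * L)]
        _ = δN * Real.exp (C₂ * L) := by ring
    have hsp : C₃ * Real.exp (-(C₄ * L)) ≤ δN := by
      have h1 : Real.log (C₃ / δN) ≤ C₄ * L := by
        have : Real.log (C₃ / δN) / C₄ ≤ L :=
          le_trans (le_trans (le_max_right _ _) (le_max_right _ _)) hLL
        calc Real.log (C₃ / δN) = Real.log (C₃ / δN) / C₄ * C₄ := by field_simp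
          _ ≤ L * C₄ := by nlinarith
          _ = C₄ * L := by ring
      have h2 : C₃ / δN ≤ Real.exp (C₄ * L) := (Real.log_le_iff_le_exp (by positivity)).mp h1
      rw [Real.exp_neg, ← div_eq_mul_inv, div_le_iff₀ (Real.exp_pos _)]
      calc C₃ = (C₃ / δN) * δN := by field_simp
        _ ≤ Real.exp (C₄ * L) * δN := by nlinarith [Real.exp_pos (C₄ * L)]
        _ = δN * Real.exp (C₄ * L) := by ring
    -- abbreviations
    set em : ℝ := C₁ * Real.exp (-(C₂ * L)) with hem
    set ep : ℝ := C₃ * Real.exp (-(C₄ * L)) with hep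
    have hempos : 0 < em := by positivity
    have heppos : 0 < ep := by positivity
    set s1 : ℝ := (α (-L) + dN / 2) / L with hs1
    set s3 : ℝ := (dN / 2 - α L) / L with hs3
    set F : ℝ → ℝ := fun t => deriv (trunc α dN L) t ^ 2 + Fb (trunc α dN L t) with hF
    set g1 : ℝ → ℝ := fun t => s1 ^ 2 + Fb (((t + 2 * L) / L) * α (-L) + ((t + L) / L) * (dN / 2)) with hg1
    set g3 : ℝ → ℝ := fun t => s3 ^ 2 + Fb (((2 * L - t) / L) * α L + ((t - L) / L) * (dN / 2)) with hg3
    set gm : ℝ → ℝ := fun t => deriv α t ^ 2 + Fb (α t) with hgm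
    clear_value em ep s1 s3 F g1 g3 gm
    have hg1c : Continuous g1 := by
      rw [hg1]
      apply continuous_const.add
      apply hFbc.comp
      have : Continuous fun t : ℝ => ((t + 2 * L) / L) * α (-L) + ((t + L) / L) * (dN / 2) := by
        continuity
      exact this
    have hg3c : Continuous g3 := by
      rw [hg3]
      apply continuous_const.add
      apply hFbc.comp
      have : Continuous fun t : ℝ => ((2 * L - t) / L) * α L + ((t - L) / L) * (dN / 2) := by
        continuity
      exact this
    -- ae facts
    have hneL : ∀ᵐ x : ℝ, x ≠ -L := by
      filter_upwards [compl_mem_ae_iff.mpr (measure_singleton (-L))] with x hx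
      simpa using hx
    have hneLp : ∀ᵐ x : ℝ, x ≠ L := by
      filter_upwards [compl_mem_ae_iff.mpr (measure_singleton L)] with x hx
      simpa using hx
    -- piece 1
    have hcong1 : ∀ᵐ x ∂(volume.restrict (Set.uIoc (-(2*L)) (-L))), F x = g1 x := by
      filter_upwards [ae_restrict_mem measurableSet_uIoc, ae_restrict_of_ae hneL] with x hx hne
      rw [uIoc_of_le (by linarith : -(2*L) ≤ -L)] at hx
      have hxlt : x < -L := lt_of_le_of_ne hx.2 hne
      simp only [hF, hg1, hs1]
      rw [deriv_trunc1 hL hxlt, trunc_eq1 hxlt.le]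
    have hig1 : IntervalIntegrable g1 volume (-(2*L)) (-L) := hg1c.intervalIntegrable _ _
    have hiF1 : IntervalIntegrable F volume (-(2*L)) (-L) :=
      hig1.congr_ae (Filter.EventuallyEq.symm hcong1)
    -- piece 3
    have hcong3 : ∀ᵐ x ∂(volume.restrict (Set.uIoc L (2*L))), F x = g3 x := by
      filter_upwards [ae_restrict_mem measurableSet_uIoc] with x hx
      rw [uIoc_of_le (by linarith : L ≤ 2*L)] at hx
      simp only [hF, hg3, hs3]
      rw [deriv_trunc3 hL hx.1, trunc_eq3 hL hx.1.le]
    have hig3 : IntervalIntegrable g3 volume L (2*L) := hg3c.intervalIntegrable _ _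
    have hiF3 : IntervalIntegrable F volume L (2*L) :=
      hig3.congr_ae (Filter.EventuallyEq.symm hcong3)
    -- middle piece
    have hcongm : ∀ᵐ x ∂(volume.restrict (Set.uIoc (-L) L)), F x = gm x := by
      filter_upwards [ae_restrict_mem measurableSet_uIoc, ae_restrict_of_ae hneLp] with x hx hne
      rw [uIoc_of_le (by linarith : -L ≤ L)] at hx
      have hxlt : x < L := lt_of_le_of_ne hx.2 hne
      simp only [hF, hgm]
      rw [deriv_trunc2 hL hx.1 hxlt, trunc_eq2 hL hx.1.le hxlt.le]
    have higm : IntervalIntegrable gm volume (-L) L := hαint.intervalIntegrable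
    have hiFm : IntervalIntegrable F volume (-L) L :=
      higm.congr_ae (Filter.EventuallyEq.symm hcongm)
    -- global-ae congruence statements (for integral_congr_ae)
    have hcong1' : ∀ᵐ x : ℝ, x ∈ Set.uIoc (-(2*L)) (-L) → F x = g1 x := by
      filter_upwards [hneL] with x hne hmem
      rw [uIoc_of_le (by linarith : -(2*L) ≤ -L)] at hmem
      have hxlt : x < -L := lt_of_le_of_ne hmem.2 hne
      simp only [hF, hg1, hs1]
      rw [deriv_trunc1 hL hxlt, trunc_eq1 hxlt.le]
    have hcong3' : ∀ᵐ x : ℝ, x ∈ Set.uIoc L (2*L) → F x = g3 x := by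
      filter_upwards with x hmem
      rw [uIoc_of_le (by linarith : L ≤ 2*L)] at hmem
      simp only [hF, hg3, hs3]
      rw [deriv_trunc3 hL hmem.1, trunc_eq3 hL hmem.1.le]
    have hcongm' : ∀ᵐ x : ℝ, x ∈ Set.uIoc (-L) L → F x = gm x := by
      filter_upwards [hneLp] with x hne hmem
      rw [uIoc_of_le (by linarith : -L ≤ L)] at hmem
      have hxlt : x < L := lt_of_le_of_ne hmem.2 hne
      simp only [hF, hgm]
      rw [deriv_trunc2 hL hmem.1 hxlt, trunc_eq2 hL hmem.1.le hxlt.le]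
    -- split
    have hsplit : (∫ t in (-(2*L))..(2*L), F t)
        = (∫ t in (-(2*L))..(-L), F t) + (∫ t in (-L)..L, F t) + (∫ t in L..(2*L), F t) := by
      rw [intervalIntegral.integral_add_adjacent_intervals hiF1 hiFm,
        intervalIntegral.integral_add_adjacent_intervals (hiF1.trans hiFm) hiF3]
    -- bound on piece 1
    have hy_lo : ∀ x ∈ Icc (-(2*L)) (-L),
        -(dN/2) ≤ ((x + 2 * L) / L) * α (-L) + ((x + L) / L) * (dN / 2) := by
      intro x hx
      have e := trunc_endpoint_neg (α := α) (dN := dN) hL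
      rw [trunc_eq1 (by linarith : -(2*L) ≤ -L)] at e
      calc -(dN/2) = ((-(2*L) + 2 * L) / L) * α (-L) + ((-(2*L) + L) / L) * (dN / 2) := e.symm
        _ ≤ _ := lin1_mono hL hA.1.le hx.1
    have hy_hi : ∀ x ∈ Icc (-(2*L)) (-L),
        ((x + 2 * L) / L) * α (-L) + ((x + L) / L) * (dN / 2) ≤ α (-L) := by
      intro x hx
      calc ((x + 2 * L) / L) * α (-L) + ((x + L) / L) * (dN / 2)
          ≤ ((-L + 2 * L) / L) * α (-L) + ((-L + L) / L) * (dN / 2) := lin1_mono hL hA.1.le hx.2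
        _ = α (-L) := lin1_val hL
    have hb1 : ∀ x ∈ Icc (-(2*L)) (-L), g1 x ≤ (1 + c₂') * em ^ 2 := by
      intro x hx
      set y := ((x + 2 * L) / L) * α (-L) + ((x + L) / L) * (dN / 2) with hy
      clear_value y
      have h1 := hy_lo x hx
      have h2 := hy_hi x hx
      rw [← hy] at h1 h2
      have hyneg : y ≤ 0 := by linarith [hABn, hBpos]
      have harg1 : 0 ≤ dN/2 + y := by linarith
      have harg2 : dN/2 + y ≤ em := by linarith [hεm]
      have hargsq : (dN/2 + y)^2 ≤ δN^2 := pow_le_pow_left₀ harg1 (harg2.trans hsm) 2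
      have hfle := (hH1 _ (sq_nonneg (dN/2 + y)) hargsq).2
      have hargem : (dN/2 + y)^2 ≤ em^2 := pow_le_pow_left₀ harg1 harg2 2
      have hFby : Fb y ≤ c₂' * em^2 := by
        rw [hFbm y hyneg]
        calc f ((dN / 2 + y) ^ 2) ≤ c₂' * (dN/2 + y)^2 := hfle
          _ ≤ c₂' * em^2 := mul_le_mul_of_nonneg_left hargem hc₂'.le
      have hs1em : s1 ≤ em := by
        rw [hs1]
        calc (α (-L) + dN / 2) / L ≤ (α (-L) + dN / 2) / 1 := by
              apply div_le_div_of_nonneg_left (by linarith [hA.1]) one_pos hL1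
          _ = α (-L) + dN / 2 := by ring
          _ ≤ em := hεm
      have hs1nn : 0 ≤ s1 := hs1 ▸ div_nonneg (by linarith [hA.1]) hL.le
      have hsq : s1^2 ≤ em^2 := pow_le_pow_left₀ hs1nn hs1em 2
      simp only [hg1, ← hy]
      linarith [hsq, hFby]
    have hK1 : (∫ t in (-(2*L))..(-L), F t) ≤ L * ((1 + c₂') * em ^ 2) := by
      rw [intervalIntegral.integral_congr_ae hcong1']
      calc (∫ t in (-(2*L))..(-L), g1 t)
          ≤ ∫ _ in (-(2*L))..(-L), (1 + c₂') * em ^ 2 :=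
            intervalIntegral.integral_mono_on (by linarith) hig1
              (intervalIntegrable_const) hb1
        _ = ((-L) - (-(2*L))) * ((1 + c₂') * em ^ 2) := by
            rw [intervalIntegral.integral_const, smul_eq_mul]
        _ = L * ((1 + c₂') * em ^ 2) := by ring
    -- bound on piece 3
    have hz_lo : ∀ x ∈ Icc L (2*L),
        α L ≤ ((2 * L - x) / L) * α L + ((x - L) / L) * (dN / 2) := by
      intro x hx
      calc α L = ((2 * L - L) / L) * α L + ((L - L) / L) * (dN / 2) := (lin3_val hL).symm
        _ ≤ _ := lin3_mono hL hB.2.le hx.1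
    have hz_hi : ∀ x ∈ Icc L (2*L),
        ((2 * L - x) / L) * α L + ((x - L) / L) * (dN / 2) ≤ dN/2 := by
      intro x hx
      have e := trunc_endpoint_pos (α := α) (dN := dN) hL
      rw [trunc_eq3 hL (by linarith : L ≤ 2*L)] at e
      calc ((2 * L - x) / L) * α L + ((x - L) / L) * (dN / 2)
          ≤ ((2 * L - 2*L) / L) * α L + ((2*L - L) / L) * (dN / 2) := lin3_mono hL hB.2.le hx.2
        _ = dN/2 := e
    have hb3 : ∀ x ∈ Icc L (2*L), g3 x ≤ (1 + c₂') * ep ^ 2 := by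
      intro x hx
      set y := ((2 * L - x) / L) * α L + ((x - L) / L) * (dN / 2) with hy
      clear_value y
      have h1 := hz_lo x hx
      have h2 := hz_hi x hx
      rw [← hy] at h1 h2
      have hypos : 0 ≤ y := by linarith [hBpos]
      have harg1 : 0 ≤ dN/2 - y := by linarith
      have harg2 : dN/2 - y ≤ ep := by linarith [hεp]
      have hargsq : (dN/2 - y)^2 ≤ δN^2 := pow_le_pow_left₀ harg1 (harg2.trans hsp) 2
      have hfle := (hH1 _ (sq_nonneg (dN/2 - y)) hargsq).2
      have hargep : (dN/2 - y)^2 ≤ ep^2 := pow_le_pow_left₀ harg1 harg2 2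
      have hFby : Fb y ≤ c₂' * ep^2 := by
        rw [hFbp y hypos]
        calc f ((dN / 2 - y) ^ 2) ≤ c₂' * (dN/2 - y)^2 := hfle
          _ ≤ c₂' * ep^2 := mul_le_mul_of_nonneg_left hargep hc₂'.le
      have hs3ep : s3 ≤ ep := by
        rw [hs3]
        calc (dN / 2 - α L) / L ≤ (dN / 2 - α L) / 1 := by
              apply div_le_div_of_nonneg_left (by linarith [hB.2]) one_pos hL1
          _ = dN / 2 - α L := by ring
          _ ≤ ep := hεp
      have hs3nn : 0 ≤ s3 := hs3 ▸ div_nonneg (by linarith [hB.2]) hL.le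
      have hsq : s3^2 ≤ ep^2 := pow_le_pow_left₀ hs3nn hs3ep 2
      simp only [hg3, ← hy]
      linarith [hsq, hFby]
    have hK3 : (∫ t in L..(2*L), F t) ≤ L * ((1 + c₂') * ep ^ 2) := by
      rw [intervalIntegral.integral_congr_ae hcong3']
      calc (∫ t in L..(2*L), g3 t)
          ≤ ∫ _ in L..(2*L), (1 + c₂') * ep ^ 2 :=
            intervalIntegral.integral_mono_on (by linarith) hig3
              (intervalIntegrable_const) hb3
        _ = ((2*L) - L) * ((1 + c₂') * ep ^ 2) := by
            rw [intervalIntegral.integral_const, smul_eq_mul]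
        _ = L * ((1 + c₂') * ep ^ 2) := by ring
    -- middle piece
    have hKm : (∫ t in (-L)..L, F t) ≤ c0b := by
      rw [intervalIntegral.integral_congr_ae hcongm',
        intervalIntegral.integral_of_le (by linarith : -L ≤ L)]
      calc (∫ x in Ioc (-L) L, gm x) ≤ ∫ x, gm x :=
            setIntegral_le_integral hαint
              (ae_of_all _ (fun x => by
                simp only [hgm, Pi.zero_apply]
                exact add_nonneg (sq_nonneg _) (hFb0 _)))
        _ = c0b := hαen
    -- final arithmetic
    set E : ℝ := Real.exp (-(c * L)) with hE
    have hEpos : 0 < E := Real.exp_pos _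
    clear_value E
    have hLE : L * E ≤ 1 / c := by
      have h1 : c * L ≤ Real.exp (c * L) := by
        linarith [Real.add_one_le_exp (c * L)]
      rw [hE, Real.exp_neg, ← div_eq_mul_inv, div_le_iff₀ (Real.exp_pos _)]
      calc L = (1/c) * (c * L) := by field_simp
        _ ≤ (1/c) * Real.exp (c * L) := by
            apply mul_le_mul_of_nonneg_left h1
            positivity
        _ = 1 / c * Real.exp (c * L) := rfl
    have hemE : em ≤ C₁ * E := by
      rw [hem]
      have : Real.exp (-(C₂ * L)) ≤ Real.exp (-(c * L)) := by
        apply Real.exp_le_exp.mpr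
        have h9 : c ≤ C₂ := by rw [hc]; exact min_le_left _ _
        have := mul_le_mul_of_nonneg_right h9 hL.le
        linarith
      calc C₁ * Real.exp (-(C₂ * L)) ≤ C₁ * Real.exp (-(c * L)) :=
            mul_le_mul_of_nonneg_left this hC₁.le
        _ = C₁ * E := by rw [hE]
    have hepE : ep ≤ C₃ * E := by
      rw [hep]
      have : Real.exp (-(C₄ * L)) ≤ Real.exp (-(c * L)) := by
        apply Real.exp_le_exp.mpr
        have h9 : c ≤ C₄ := by rw [hc]; exact min_le_right _ _
        have := mul_le_mul_of_nonneg_right h9 hL.le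
        linarith
      calc C₃ * Real.exp (-(C₄ * L)) ≤ C₃ * Real.exp (-(c * L)) :=
            mul_le_mul_of_nonneg_left this hC₃.le
        _ = C₃ * E := by rw [hE]
    have hLE2 : L * E^2 ≤ (1/c) * E := by
      have h := mul_le_mul_of_nonneg_right hLE hEpos.le
      calc L * E^2 = (L * E) * E := by ring
        _ ≤ (1/c) * E := h
    have hem2 : em^2 ≤ C₁^2 * E^2 := by
      calc em^2 ≤ (C₁ * E)^2 := pow_le_pow_left₀ hempos.le hemE 2
        _ = C₁^2 * E^2 := by ring
    have hep2 : ep^2 ≤ C₃^2 * E^2 := by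
      calc ep^2 ≤ (C₃ * E)^2 := pow_le_pow_left₀ heppos.le hepE 2
        _ = C₃^2 * E^2 := by ring
    have a1 : L * em^2 ≤ C₁^2 * (L * E^2) := by
      calc L * em^2 ≤ L * (C₁^2 * E^2) := mul_le_mul_of_nonneg_left hem2 hL.le
        _ = C₁^2 * (L * E^2) := by ring
    have a2 : L * ep^2 ≤ C₃^2 * (L * E^2) := by
      calc L * ep^2 ≤ L * (C₃^2 * E^2) := mul_le_mul_of_nonneg_left hep2 hL.le
        _ = C₃^2 * (L * E^2) := by ring
    have key : L * ((1 + c₂') * em ^ 2) + L * ((1 + c₂') * ep ^ 2)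
        ≤ (1 + c₂') * (C₁ ^ 2 + C₃ ^ 2) / c * E := by
      have b1 := mul_le_mul_of_nonneg_left hLE2 (by positivity : (0:ℝ) ≤ C₁^2)
      have b2 := mul_le_mul_of_nonneg_left hLE2 (by positivity : (0:ℝ) ≤ C₃^2)
      have h5 : L * em^2 + L * ep^2 ≤ (C₁^2 + C₃^2) * ((1/c) * E) := by
        have e : (C₁^2 + C₃^2) * ((1/c) * E) = C₁^2 * ((1/c) * E) + C₃^2 * ((1/c) * E) := by ring
        rw [e]
        linarith [a1, a2, b1, b2]
      have h6 : (1 + c₂') * (C₁ ^ 2 + C₃ ^ 2) / c * E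
          = (1 + c₂') * ((C₁^2 + C₃^2) * ((1/c) * E)) := by
        field_simp
      rw [h6]
      have h7 := mul_le_mul_of_nonneg_left h5 (by linarith : (0:ℝ) ≤ 1 + c₂')
      calc L * ((1 + c₂') * em ^ 2) + L * ((1 + c₂') * ep ^ 2)
          = (1 + c₂') * (L * em^2 + L * ep^2) := by ring
        _ ≤ (1 + c₂') * ((C₁^2 + C₃^2) * ((1/c) * E)) := h7
    show (∫ t in (-(2*L))..(2*L), F t) ≤ c0b + (1 + c₂') * (C₁ ^ 2 + C₃ ^ 2) / c * E
    rw [hsplit]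
    linarith [hK1, hKm, hK3, key]
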